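/- arXiv:2105.08713 — 3 statements merged into one kernel-verified Lean document; each statement's English description precedes it below -/
import Mathlib

section
/- For μ_1, μ_2 > 0 with μ_1 ≤ μ_2, σ_1², σ_2² ≥ 0, and L = 8, the linear program minimize 2(μ_1 d_1 + μ_2 d_2) subject to d_1, d_2 ≥ 0, d_1 + d_2 = D, (7/4)L ≤ D ≤ L/R_min, d_2 ≥ (3/2)L − (1/2)D, d_2 ≥ (5/2)L − D, with R_min ∈ [1/2, 4/7], has optimal value min{16μ_1 + 12μ_2, 40(μ_2 − μ_1) + (16/R_min)(2μ_1 − μ_2)}. -/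
/-- For `μ₁, μ₂ > 0` with `μ₁ ≤ μ₂` and `L = 8`, the LP minimizing the peak AoI
`2(μ₁d₁ + μ₂d₂)` subject to the PIR constraints for `N = 2`, `M = 3` with
`R_min ∈ [1/2, 4/7]` has optimal value
`min{16μ₁ + 12μ₂, 40(μ₂ − μ₁) + (16/R_min)(2μ₁ − μ₂)}`. -/
theorem stmt_2 (μ₁ μ₂ Rmin : ℝ) (hμ₁ : 0 < μ₁) (hμ₂ : 0 < μ₂) (hμ : μ₁ ≤ μ₂)
    (hR : Rmin ∈ Set.Icc (1 / 2 : ℝ) (4 / 7)) :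
    IsLeast {y : ℝ | ∃ d₁ d₂ D : ℝ, 0 ≤ d₁ ∧ 0 ≤ d₂ ∧ d₁ + d₂ = D ∧
        (7 / 4) * 8 ≤ D ∧ D ≤ 8 / Rmin ∧
        d₂ ≥ (3 / 2) * 8 - (1 / 2) * D ∧ d₂ ≥ (5 / 2) * 8 - D ∧
        y = 2 * (μ₁ * d₁ + μ₂ * d₂)}
      (min (16 * μ₁ + 12 * μ₂) (40 * (μ₂ - μ₁) + (16 / Rmin) * (2 * μ₁ - μ₂))) := by
  obtain ⟨hR1, hR2⟩ := hR
  have hRpos : 0 < Rmin := by linarith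
  have ht1 : (14 : ℝ) ≤ 8 / Rmin := by
    rw [le_div_iff₀ hRpos]; nlinarith
  have ht2 : 8 / Rmin ≤ 16 := by
    rw [div_le_iff₀ hRpos]; nlinarith
  have h16 : (16 : ℝ) / Rmin = 2 * (8 / Rmin) := by ring
  constructor
  · rcases le_total (16 * μ₁ + 12 * μ₂)
      (40 * (μ₂ - μ₁) + (16 / Rmin) * (2 * μ₁ - μ₂)) with h | h
    · rw [min_eq_left h]
      exact ⟨8, 6, 14, by norm_num, by norm_num, by norm_num, by norm_num, ht1,
        by norm_num, by norm_num, by ring⟩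
    · rw [min_eq_right h]
      refine ⟨16 / Rmin - 20, 20 - 8 / Rmin, 8 / Rmin, ?_, ?_, by ring, by linarith, le_refl _,
        ?_, ?_, ?_⟩
      · rw [h16]; linarith
      · linarith
      · linarith
      · linarith
      · rw [h16]; ring
  · rintro y ⟨d₁, d₂, D, hd₁, hd₂, hsum, hD1, hD2, hc1, hc2, hy⟩
    rcases le_total μ₂ (2 * μ₁) with h | h
    · calc min (16 * μ₁ + 12 * μ₂) (40 * (μ₂ - μ₁) + (16 / Rmin) * (2 * μ₁ - μ₂))
          ≤ 16 * μ₁ + 12 * μ₂ := min_le_left _ _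
        _ ≤ y := by
            rw [hy]; nlinarith [mul_nonneg (sub_nonneg.2 hμ) (by linarith : (0:ℝ) ≤ d₂ - (20 - D)),
              mul_nonneg (by linarith : (0:ℝ) ≤ 2 * μ₁ - μ₂) (by linarith : (0:ℝ) ≤ D - 14)]
    · calc min (16 * μ₁ + 12 * μ₂) (40 * (μ₂ - μ₁) + (16 / Rmin) * (2 * μ₁ - μ₂))
          ≤ 40 * (μ₂ - μ₁) + (16 / Rmin) * (2 * μ₁ - μ₂) := min_le_right _ _
        _ ≤ y := by
            rw [hy, h16]
            nlinarith [mul_nonneg (sub_nonneg.2 hμ) (by linarith : (0:ℝ) ≤ d₂ - (20 - D)),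
              mul_nonneg (by linarith : (0:ℝ) ≤ μ₂ - 2 * μ₁) (by linarith : (0:ℝ) ≤ 8 / Rmin - D)]
end

section
/- For μ_1 ≤ μ_2 positive reals, L = 8, and R_min ∈ [1/3, 1/2], the minimum of 2(μ_1 d_1 + μ_2 d_2) over d_1 ≥ d_2 ≥ 0, d_1 + d_2 = D, (7/4)L ≤ D ≤ L/R_min, d_2 ≥ max{(3/2)L − (1/2)D, (5/2)L − D} equals min{16μ_1 + 12μ_2, 24μ_1 + 8μ_2, 8[3(μ_2 − μ_1) + (1/R_min)(3μ_1 − μ_2)]}. -/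
/-!
Writing `s = d₁ + d₂`, the objective is `2 (μ₁ s + (μ₂ - μ₁) d₂)`, and `μ₂ - μ₁ ≥ 0`, so for fixed
`s` it is smallest when `d₂` sits on the lower envelope `max (5L/2 - s) (3L/2 - s/2)` of the
traffic constraints. That envelope has a single kink at `s = 2L`, so along it the objective is
affine on `[7L/4, 2L]` and on `[2L, D_max]`, hence bounded below by its values at
`s = 7L/4, 2L, D_max`. These are the vertices `(L, 3L/4)`, `(3L/2, L/2)` and
`((3D_max - 3L)/2, (3L - D_max)/2)`, which are feasible as long as `2L ≤ D_max ≤ 3L`; for `L = 8`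
and `D_max = L / R_min` this is `R_min ∈ [1/3, 1/2]`.
-/

open Set

theorem min_le_add_mul_of_mem_Icc {a b s c m : ℝ} (hs : s ∈ Icc a b) :
    min (c + m * a) (c + m * b) ≤ c + m * s := by
  rcases le_total 0 m with hm | hm
  · exact min_le_of_left_le (by gcongr; exact hs.1)
  · exact min_le_of_right_le (add_le_add_right (mul_le_mul_of_nonpos_left hs.2 hm) c)

def peakAoIValues (μ₁ μ₂ L Dmax : ℝ) : Set ℝ :=
  {y : ℝ | ∃ d₁ d₂ D : ℝ, d₁ ≥ d₂ ∧ d₂ ≥ 0 ∧ d₁ + d₂ = D ∧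
    (7 / 4) * L ≤ D ∧ D ≤ Dmax ∧
    d₂ ≥ max ((3 / 2) * L - (1 / 2) * D) ((5 / 2) * L - D) ∧
    y = 2 * (μ₁ * d₁ + μ₂ * d₂)}

section PeakAoI

variable {μ₁ μ₂ L Dmax d₁ d₂ : ℝ}

theorem two_mul_add_mem_peakAoIValues (h₁₂ : d₂ ≤ d₁) (h₂ : 0 ≤ d₂)
    (hs : d₁ + d₂ ∈ Icc (7 / 4 * L) Dmax) (hA : 5 / 2 * L ≤ d₁ + 2 * d₂)
    (hB : 3 * L ≤ d₁ + 3 * d₂) :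
    2 * (μ₁ * d₁ + μ₂ * d₂) ∈ peakAoIValues μ₁ μ₂ L Dmax :=
  ⟨d₁, d₂, _, h₁₂, h₂, rfl, hs.1, hs.2, max_le (by linarith) (by linarith), rfl⟩

theorem min_vertex_le_two_mul_add (hμ : μ₁ ≤ μ₂) (hs : d₁ + d₂ ∈ Icc (7 / 4 * L) Dmax)
    (hA : 5 / 2 * L ≤ d₁ + 2 * d₂) (hB : 3 * L ≤ d₁ + 3 * d₂) :
    min (min (2 * L * μ₁ + 3 / 2 * L * μ₂) (3 * L * μ₁ + L * μ₂))
        (3 * (Dmax - L) * μ₁ + (3 * L - Dmax) * μ₂) ≤ 2 * (μ₁ * d₁ + μ₂ * d₂) := by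
  set s := d₁ + d₂
  have hδ : 0 ≤ μ₂ - μ₁ := sub_nonneg.2 hμ
  rw [show 2 * (μ₁ * d₁ + μ₂ * d₂) = 2 * (μ₁ * s + (μ₂ - μ₁) * d₂) by ring]
  rcases le_total s (2 * L) with hsL | hsL
  · refine min_le_of_left_le ?_
    calc min (2 * L * μ₁ + 3 / 2 * L * μ₂) (3 * L * μ₁ + L * μ₂)
        = min (5 * L * (μ₂ - μ₁) + (4 * μ₁ - 2 * μ₂) * (7 / 4 * L))
            (5 * L * (μ₂ - μ₁) + (4 * μ₁ - 2 * μ₂) * (2 * L)) := by congr 1 <;> ring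
      _ ≤ 5 * L * (μ₂ - μ₁) + (4 * μ₁ - 2 * μ₂) * s := min_le_add_mul_of_mem_Icc ⟨hs.1, hsL⟩
      _ = 2 * (μ₁ * s + (μ₂ - μ₁) * (5 / 2 * L - s)) := by ring
      _ ≤ 2 * (μ₁ * s + (μ₂ - μ₁) * d₂) := by gcongr; linarith
  · calc _ ≤ min (3 * L * μ₁ + L * μ₂) (3 * (Dmax - L) * μ₁ + (3 * L - Dmax) * μ₂) :=
          min_le_min_right _ (min_le_right _ _)
      _ = min (3 * L * (μ₂ - μ₁) + (3 * μ₁ - μ₂) * (2 * L))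
            (3 * L * (μ₂ - μ₁) + (3 * μ₁ - μ₂) * Dmax) := by congr 1 <;> ring
      _ ≤ 3 * L * (μ₂ - μ₁) + (3 * μ₁ - μ₂) * s := min_le_add_mul_of_mem_Icc ⟨hsL, hs.2⟩
      _ = 2 * (μ₁ * s + (μ₂ - μ₁) * (3 / 2 * L - s / 2)) := by ring
      _ ≤ 2 * (μ₁ * s + (μ₂ - μ₁) * d₂) := by gcongr; linarith

theorem isLeast_peakAoIValues (hμ : μ₁ ≤ μ₂) (h2L : 2 * L ≤ Dmax) (h3L : Dmax ≤ 3 * L) :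
    IsLeast (peakAoIValues μ₁ μ₂ L Dmax)
      (min (min (2 * L * μ₁ + 3 / 2 * L * μ₂) (3 * L * μ₁ + L * μ₂))
        (3 * (Dmax - L) * μ₁ + (3 * L - Dmax) * μ₂)) := by
  have hL : 0 ≤ L := by linarith
  refine ⟨?_, ?_⟩
  · have hA := two_mul_add_mem_peakAoIValues (μ₁ := μ₁) (μ₂ := μ₂) (L := L) (Dmax := Dmax) (d₁ := L) (d₂ := 3 / 4 * L)
      (by linarith) (by linarith) ⟨by linarith, by linarith⟩ (by linarith) (by linarith)
    have hB := two_mul_add_mem_peakAoIValues (μ₁ := μ₁) (μ₂ := μ₂) (L := L) (Dmax := Dmax) (d₁ := 3 / 2 * L)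
      (d₂ := L / 2) (by linarith) (by linarith) ⟨by linarith, by linarith⟩ (by linarith)
      (by linarith)
    have hC := two_mul_add_mem_peakAoIValues (μ₁ := μ₁) (μ₂ := μ₂) (L := L) (Dmax := Dmax) (d₁ := (3 * Dmax - 3 * L) / 2)
      (d₂ := (3 * L - Dmax) / 2) (by linarith) (by linarith) ⟨by linarith, by linarith⟩
      (by linarith) (by linarith)
    refine min_rec' _ (min_rec' _ ?_ ?_) ?_
    · convert hA using 1; ring
    · convert hB using 1; ring
    · convert hC using 1; ring
  · rintro y ⟨d₁, d₂, D, h₁₂, -, rfl, hlo, hhi, hmax, rfl⟩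
    rw [ge_iff_le, max_le_iff] at hmax
    exact min_vertex_le_two_mul_add hμ ⟨hlo, hhi⟩ (by linarith [hmax.2]) (by linarith [hmax.1])

end PeakAoI

theorem stmt_3_general (μ₁ μ₂ Rmin : ℝ) (hμ : μ₁ ≤ μ₂)
    (hR : Rmin ∈ Set.Icc (1 / 3 : ℝ) (1 / 2)) :
    IsLeast {y : ℝ | ∃ d₁ d₂ D : ℝ, d₁ ≥ d₂ ∧ d₂ ≥ 0 ∧ d₁ + d₂ = D ∧
        (7 / 4) * 8 ≤ D ∧ D ≤ 8 / Rmin ∧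
        d₂ ≥ max ((3 / 2) * 8 - (1 / 2) * D) ((5 / 2) * 8 - D) ∧
        y = 2 * (μ₁ * d₁ + μ₂ * d₂)}
      (min (min (16 * μ₁ + 12 * μ₂) (24 * μ₁ + 8 * μ₂))
        (8 * (3 * (μ₂ - μ₁) + (1 / Rmin) * (3 * μ₁ - μ₂)))) := by
  obtain ⟨hR₁, hR₂⟩ := hR
  have hRpos : 0 < Rmin := by linarith
  have h2L : 2 * 8 ≤ 8 / Rmin := by rw [le_div_iff₀ hRpos]; linarith
  have h3L : 8 / Rmin ≤ 3 * 8 := by rw [div_le_iff₀ hRpos]; linarith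
  show IsLeast (peakAoIValues μ₁ μ₂ 8 (8 / Rmin)) _
  convert isLeast_peakAoIValues hμ h2L h3L using 3 <;> ring

/-- For `μ₁ ≤ μ₂` positive, `L = 8`, `R_min ∈ [1/3, 1/2]`, the minimum of the peak
AoI `2(μ₁d₁ + μ₂d₂)` over the PIR constraint set (with `d₁ ≥ d₂`) equals
`min{16μ₁ + 12μ₂, 24μ₁ + 8μ₂, 8[3(μ₂ − μ₁) + (1/R_min)(3μ₁ − μ₂)]}`. -/
theorem stmt_3 (μ₁ μ₂ Rmin : ℝ) (hμ₁ : 0 < μ₁) (hμ₂ : 0 < μ₂) (hμ : μ₁ ≤ μ₂)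
    (hR : Rmin ∈ Set.Icc (1 / 3 : ℝ) (1 / 2)) :
    IsLeast {y : ℝ | ∃ d₁ d₂ D : ℝ, d₁ ≥ d₂ ∧ d₂ ≥ 0 ∧ d₁ + d₂ = D ∧
        (7 / 4) * 8 ≤ D ∧ D ≤ 8 / Rmin ∧
        d₂ ≥ max ((3 / 2) * 8 - (1 / 2) * D) ((5 / 2) * 8 - D) ∧
        y = 2 * (μ₁ * d₁ + μ₂ * d₂)}
      (min (min (16 * μ₁ + 12 * μ₂) (24 * μ₁ + 8 * μ₂))
        (8 * (3 * (μ₂ - μ₁) + (1 / Rmin) * (3 * μ₁ - μ₂)))) :=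
  stmt_3_general μ₁ μ₂ Rmin hμ hR
end

section
/- For M = 2 messages and N servers, for any traffic ratio vector τ with τ_1 ≥ ... ≥ τ_N ≥ 0 and Σ τ_n = 1, the capacity expression C(τ) = min_{n_0 ∈ [N]} (1 + (Σ_{n=n_0+1}^N τ_n)/n_0)/(1 + 1/n_0) satisfies 1/2 ≤ C(τ) ≤ N/(N+1), with the upper bound attained when τ_n = 1/N for all n. -/
/-!
Each term of the minimum equals `(a + s) / (a + 1)` with `a = n₀ ≥ 1` and tail mass `s ≥ 0`, hence
is at least `1/2`; the last term has an empty tail and equals `N / (N + 1)`. For uniform traffic the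
tail after `a` servers is `(N - a) / N`, and `(a + (N - a)/N) / (a + 1) ≥ N / (N + 1)` reduces to
`a ≤ N`, so the last term is the minimum.
-/

open Finset

noncomputable def capacityTerm (a s : ℝ) : ℝ := (1 + s / a) / (1 + 1 / a)

lemma capacityTerm_eq {a : ℝ} (s : ℝ) (ha : 0 < a) : capacityTerm a s = (a + s) / (a + 1) := by
  unfold capacityTerm
  field_simp

lemma one_half_le_capacityTerm {a s : ℝ} (ha : 1 ≤ a) (hs : 0 ≤ s) : 1 / 2 ≤ capacityTerm a s := by
  rw [capacityTerm_eq s (by linarith), le_div_iff₀ (by linarith)]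
  linarith

lemma capacityTerm_zero {a : ℝ} (ha : 0 < a) : capacityTerm a 0 = a / (a + 1) := by
  rw [capacityTerm_eq 0 ha, add_zero]

lemma div_succ_le_capacityTerm_uniform {a N : ℝ} (ha : 0 < a) (haN : a ≤ N) :
    N / (N + 1) ≤ capacityTerm a ((N - a) / N) := by
  have hN : 0 < N := ha.trans_le haN
  rw [capacityTerm_eq _ ha, div_le_div_iff₀ (by linarith) (by linarith)]
  rw [show (a + (N - a) / N) * (N + 1) = N * (a + 1) + (N - a) / N by field_simp; ring]
  exact le_add_of_nonneg_right (div_nonneg (by linarith) hN.le)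

lemma sum_ite_lt_eq_sum_Ioi {α M : Type*} [Fintype α] [LinearOrder α] [LocallyFiniteOrderTop α]
    [AddCommMonoid M] (f : α → M) (a : α) :
    (∑ b, if a < b then f b else 0) = ∑ b ∈ Ioi a, f b := by
  rw [← sum_filter, filter_lt_eq_Ioi]

lemma sum_Ioi_const_fin {m : ℕ} (c : ℝ) (k : Fin (m + 1)) :
    ∑ _n ∈ Ioi k, c = ((m : ℝ) - k) * c := by
  rw [sum_const, Fin.card_Ioi, nsmul_eq_mul, Nat.add_sub_cancel, Nat.cast_sub (by omega)]

theorem stmt_14_general (N : ℕ) (hN : 0 < N) (τ : Fin N → ℝ)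
    (hnonneg : ∀ n, 0 ≤ τ n) :
    let C : ℝ := (Finset.univ.inf' (Finset.univ_nonempty_iff.mpr ⟨⟨0, hN⟩⟩)
      (fun n₀ : Fin N =>
        (1 + (∑ n : Fin N, if n₀ < n then τ n else 0) / ((n₀ : ℕ) + 1)) /
          (1 + 1 / ((n₀ : ℕ) + 1))))
    (1 / 2 ≤ C ∧ C ≤ N / (N + 1)) ∧ ((∀ n, τ n = 1 / N) → C = N / (N + 1)) := by
  intro C
  obtain ⟨m, rfl⟩ : ∃ m, N = m + 1 := ⟨N - 1, by omega⟩
  set T : Fin (m + 1) → ℝ := fun k => capacityTerm ((k : ℕ) + 1) (∑ n ∈ Ioi k, τ n)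
  have hC : C = univ.inf' univ_nonempty T := by simp only [C, T, sum_ite_lt_eq_sum_Ioi]; rfl
  clear_value C
  subst hC
  have hcast : ((m + 1 : ℕ) : ℝ) = m + 1 := Nat.cast_succ m
  have hlast : T (Fin.last m) = (m + 1) / (m + 1 + 1) := by
    simp only [T, ← Fin.top_eq_last, Ioi_top, sum_empty, Fin.val_top]
    exact capacityTerm_zero (by positivity)
  have hupper : univ.inf' univ_nonempty T ≤ (m + 1) / (m + 1 + 1) :=
    hlast ▸ inf'_le T (mem_univ _)
  have hlower : 1 / 2 ≤ univ.inf' univ_nonempty T :=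
    le_inf' _ _ fun k _ =>
      one_half_le_capacityTerm (by simp) (sum_nonneg fun n _ => hnonneg n)
  refine ⟨⟨hlower, hcast ▸ hupper⟩, fun huniform => ?_⟩
  rw [hcast]
  refine le_antisymm hupper (le_inf' _ _ fun k _ => ?_)
  simp only [T, sum_congr rfl fun n _ => huniform n, sum_Ioi_const_fin, hcast]
  refine (div_succ_le_capacityTerm_uniform (a := k + 1) (N := m + 1) (by positivity)
    (by exact_mod_cast k.isLt)).trans_eq ?_
  congr 1
  ring

/-- For `M = 2` messages and `N` servers, for any decreasing probability vector
`τ`, the asymmetric-traffic capacity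
`C(τ) = min_{n₀ ∈ [N]} (1 + (∑_{n > n₀} τ_n)/n₀)/(1 + 1/n₀)` satisfies
`1/2 ≤ C(τ) ≤ N/(N+1)`, with the upper bound attained when `τ_n = 1/N` for all `n`. -/
theorem stmt_14 (N : ℕ) (hN : 0 < N) (τ : Fin N → ℝ)
    (hdec : Antitone τ) (hnonneg : ∀ n, 0 ≤ τ n) (hsum : ∑ n, τ n = 1) :
    let C : ℝ := (Finset.univ.inf' (Finset.univ_nonempty_iff.mpr ⟨⟨0, hN⟩⟩)
      (fun n₀ : Fin N =>
        (1 + (∑ n : Fin N, if n₀ < n then τ n else 0) / ((n₀ : ℕ) + 1)) /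
          (1 + 1 / ((n₀ : ℕ) + 1))))
    (1 / 2 ≤ C ∧ C ≤ N / (N + 1)) ∧ ((∀ n, τ n = 1 / N) → C = N / (N + 1)) :=
  stmt_14_general N hN τ hnonneg
end
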